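/- Let m ≥ 0, α, β ∈ ℝ, and let u, v : [0,τ] → ℂ solve the nonlinear Dirac ODE system u' = i m v + i α u|v|² + 2iβ(conj(u)v + u conj(v))v, v' = i m u + i α v|u|² + 2iβ(conj(u)v + u conj(v))u, with 𝔰 := |u(0)|² + |v(0)|² satisfying 𝔰·τ ≤ 2c₀ for some c₀ > 0 and τ ∈ (0,1]. Then with c₁ = 4|β|e^{4|β|·2c₀} and m₁' appropriate constants, there is a constant K = K(m,α,β,c₀) such that |u(τ) - u(0)| ≤ K·(1 + |v(0)|² + |u(0)|·|v(0)|)·(|v(0)| + √(𝔰·τ))·τ. In particular, |u(τ) - u(0)| → 0 as τ → 0 uniformly on bounded data. -/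

import Mathlib

noncomputable def diracN1 (m α β : ℝ) (u v : ℂ) : ℂ :=
  Complex.I * m * v + Complex.I * α * u * ((‖v‖ : ℂ))^2 +
    Complex.I * 2 * β * ((starRingEnd ℂ) u * v + u * (starRingEnd ℂ) v) * v

noncomputable def diracN2 (m α β : ℝ) (u v : ℂ) : ℂ :=
  Complex.I * m * u + Complex.I * α * v * ((‖u‖ : ℂ))^2 +
    Complex.I * 2 * β * ((starRingEnd ℂ) u * v + u * (starRingEnd ℂ) v) * u

/-!
The mass `‖u‖² + ‖v‖²` is conserved, so `‖u‖ ≤ √𝔰` for all time. The equation for `v` then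
gives the *linear* differential inequality `‖v'‖ ≤ |m|√𝔰 + C𝔰‖v‖` with `C = |α| + 4|β|`, and
Grönwall together with `𝔰τ ≤ 2c₀` bounds `‖v‖` on `[0, τ]` by `e^{2Cc₀}(‖v 0‖ + |m|√𝔰 τ)`.
Inserting this into `‖u'‖ ≤ |m|‖v‖ + C‖u‖‖v‖²` and applying the mean value inequality gives the
estimate, after `√𝔰 ≤ ‖u 0‖ + ‖v 0‖`, `√𝔰 · √𝔰 τ = 𝔰τ ≤ 2c₀` and `√𝔰 τ ≤ √(𝔰τ)`.
-/

open Real Set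

theorem gronwallBound_le_exp_mul {δ K ε x : ℝ} (hK : 0 ≤ K) (hε : 0 ≤ ε) :
    gronwallBound δ K ε x ≤ exp (K * x) * (δ + ε * x) := by
  rcases hK.eq_or_lt with rfl | hK
  · simp [gronwallBound_K0]
  rw [gronwallBound_of_K_ne_0 hK.ne']
  have hexp : exp (K * x) - 1 ≤ K * x * exp (K * x) := by
    have h := mul_le_mul_of_nonneg_right (one_sub_le_exp_neg (K * x)) (exp_pos (K * x)).le
    rw [← exp_add, neg_add_cancel, exp_zero, sub_mul, one_mul] at h
    linarith
  calc δ * exp (K * x) + ε / K * (exp (K * x) - 1)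
      ≤ δ * exp (K * x) + ε / K * (K * x * exp (K * x)) := by gcongr
    _ = exp (K * x) * (δ + ε * x) := by field_simp

theorem norm_le_exp_mul_of_norm_deriv_le {E : Type*} [NormedAddCommGroup E] [NormedSpace ℝ E]
    {f f' : ℝ → E} {K ε a b : ℝ} (hK : 0 ≤ K) (hε : 0 ≤ ε)
    (hf : ∀ x ∈ Icc a b, HasDerivAt f (f' x) x)
    (bound : ∀ x ∈ Ico a b, ‖f' x‖ ≤ K * ‖f x‖ + ε) :
    ∀ x ∈ Icc a b, ‖f x‖ ≤ exp (K * (b - a)) * (‖f a‖ + ε * (b - a)) := by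
  intro x hx
  calc ‖f x‖
      ≤ gronwallBound ‖f a‖ K ε (x - a) :=
        norm_le_gronwallBound_of_norm_deriv_right_le
          (fun y hy => (hf y hy).continuousAt.continuousWithinAt)
          (fun y hy => (hf y (Ico_subset_Icc_self hy)).hasDerivWithinAt) le_rfl bound x hx
    _ ≤ gronwallBound ‖f a‖ K ε (b - a) :=
        gronwallBound_mono (norm_nonneg _) hε hK (by linarith [hx.2])
    _ ≤ exp (K * (b - a)) * (‖f a‖ + ε * (b - a)) :=
        gronwallBound_le_exp_mul hK hε

theorem sqrt_mul_le_sqrt_mul_of_le_one {S τ : ℝ} (hS : 0 ≤ S) (hτ : τ ≤ 1) :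
    √S * τ ≤ √(S * τ) := by
  rw [sqrt_mul hS]
  gcongr
  exact le_sqrt_self_iff.2 hτ

theorem sqrt_sq_add_sq_le_add {a b : ℝ} (ha : 0 ≤ a) (hb : 0 ≤ b) : √(a ^ 2 + b ^ 2) ≤ a + b :=
  (sqrt_le_left (by positivity)).2 (by nlinarith [mul_nonneg ha hb])

theorem mul_add_mul_le_of_sq_mul_le {a b R τ c : ℝ} (ha : 0 ≤ a) (hb : 0 ≤ b) (hR : R ≤ a + b)
    (hRτ : R ^ 2 * τ ≤ c) (hc : 0 ≤ c) :
    R * (b + R * τ) ≤ (1 + c) * (1 + b ^ 2 + a * b) := by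
  nlinarith [mul_le_mul_of_nonneg_right hR hb,
    mul_nonneg hc (add_nonneg (sq_nonneg b) (mul_nonneg ha hb))]

theorem diracN2_eq_diracN1_swap (m α β : ℝ) (a b : ℂ) : diracN2 m α β a b = diracN1 m α β b a := by
  simp only [diracN1, diracN2]
  ring

theorem norm_diracN1_le (m α β : ℝ) (a b : ℂ) :
    ‖diracN1 m α β a b‖ ≤ |m| * ‖b‖ + (|α| + 4 * |β|) * ‖a‖ * ‖b‖ ^ 2 := by
  have hP : ‖(starRingEnd ℂ) a * b + a * (starRingEnd ℂ) b‖ ≤ 2 * (‖a‖ * ‖b‖) := by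
    refine (norm_add_le _ _).trans ?_
    simp only [norm_mul, Complex.norm_conj]
    linarith
  calc ‖diracN1 m α β a b‖
      ≤ ‖Complex.I * m * b‖ + ‖Complex.I * α * a * ((‖b‖ : ℂ)) ^ 2‖
        + ‖Complex.I * 2 * β * ((starRingEnd ℂ) a * b + a * (starRingEnd ℂ) b) * b‖ :=
        norm_add₃_le
    _ = |m| * ‖b‖ + |α| * ‖a‖ * ‖b‖ ^ 2
        + 2 * |β| * ‖(starRingEnd ℂ) a * b + a * (starRingEnd ℂ) b‖ * ‖b‖ := by
        simp [norm_pow]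
    _ ≤ |m| * ‖b‖ + |α| * ‖a‖ * ‖b‖ ^ 2 + 2 * |β| * (2 * (‖a‖ * ‖b‖)) * ‖b‖ := by gcongr
    _ = |m| * ‖b‖ + (|α| + 4 * |β|) * ‖a‖ * ‖b‖ ^ 2 := by ring

theorem inner_diracN1_add_inner_diracN2 (m α β : ℝ) (a b : ℂ) :
    inner ℝ a (diracN1 m α β a b) + inner ℝ b (diracN2 m α β a b) = 0 := by
  simp only [Complex.inner, ← Complex.add_re]
  apply Complex.ofReal_injective
  rw [Complex.re_eq_add_conj]
  simp only [diracN1, diracN2, map_add, map_mul, map_pow, Complex.conj_I, Complex.conj_ofReal,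
    Complex.conj_conj, map_ofNat, Complex.ofReal_zero]
  ring

section DiracSolution

variable {m α β : ℝ} {u v : ℝ → ℂ}

theorem norm_sq_add_norm_sq_eq_of_dirac (hu : ∀ s, HasDerivAt u (diracN1 m α β (u s) (v s)) s)
    (hv : ∀ s, HasDerivAt v (diracN2 m α β (u s) (v s)) s) (s : ℝ) :
    ‖u s‖ ^ 2 + ‖v s‖ ^ 2 = ‖u 0‖ ^ 2 + ‖v 0‖ ^ 2 := by
  have hderiv : ∀ x, HasDerivAt (fun s => ‖u s‖ ^ 2 + ‖v s‖ ^ 2) 0 x := fun x => by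
    have h := (hu x).norm_sq.add (hv x).norm_sq
    rwa [← mul_add, inner_diracN1_add_inner_diracN2, mul_zero] at h
  exact is_const_of_deriv_eq_zero (fun x => (hderiv x).differentiableAt)
    (fun x => (hderiv x).deriv) s 0

theorem norm_v_le_of_dirac {R : ℝ} (hv : ∀ s, HasDerivAt v (diracN2 m α β (u s) (v s)) s)
    (hu_le : ∀ s, ‖u s‖ ≤ R) {τ : ℝ} :
    ∀ x ∈ Icc 0 τ, ‖v x‖ ≤ exp ((|α| + 4 * |β|) * R ^ 2 * τ) * (‖v 0‖ + |m| * R * τ) := by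
  have hR : 0 ≤ R := (norm_nonneg _).trans (hu_le 0)
  simpa using norm_le_exp_mul_of_norm_deriv_le (K := (|α| + 4 * |β|) * R ^ 2) (ε := |m| * R)
    (a := 0) (b := τ) (by positivity) (by positivity)
    (fun x _ => hv x) fun x _ => by
      rw [diracN2_eq_diracN1_swap]
      refine (norm_diracN1_le m α β (v x) (u x)).trans ?_
      have hux := hu_le x
      have hux2 : ‖u x‖ ^ 2 ≤ R ^ 2 := by gcongr
      have hcubic : (|α| + 4 * |β|) * ‖v x‖ * ‖u x‖ ^ 2 ≤ (|α| + 4 * |β|) * ‖v x‖ * R ^ 2 := by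
        gcongr
      nlinarith [abs_nonneg m]

theorem norm_u_sub_le_of_dirac {R M τ : ℝ} (hτ : 0 ≤ τ)
    (hu : ∀ s, HasDerivAt u (diracN1 m α β (u s) (v s)) s)
    (hu_le : ∀ s, ‖u s‖ ≤ R) (hv_le : ∀ x ∈ Icc 0 τ, ‖v x‖ ≤ M) :
    ‖u τ - u 0‖ ≤ (|m| * M + (|α| + 4 * |β|) * R * M ^ 2) * τ := by
  simpa using norm_image_sub_le_of_norm_deriv_le_segment' (fun x _ => (hu x).hasDerivWithinAt)
    (fun x hx => by
      have hvx := hv_le x (Ico_subset_Icc_self hx)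
      refine (norm_diracN1_le m α β (u x) (v x)).trans ?_
      have hM : 0 ≤ M := (norm_nonneg _).trans hvx
      have hR : 0 ≤ R := (norm_nonneg _).trans (hu_le x)
      have hux := hu_le x
      gcongr) τ ⟨hτ, le_rfl⟩

end DiracSolution

theorem stmt18_general (m α β c₀ : ℝ) (hc₀ : 0 < c₀) :
    ∃ K : ℝ, 0 < K ∧
      ∀ (τ : ℝ) (u v : ℝ → ℂ), 0 < τ → τ ≤ 1 →
        (∀ s, HasDerivAt u (diracN1 m α β (u s) (v s)) s) →
        (∀ s, HasDerivAt v (diracN2 m α β (u s) (v s)) s) →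
        (‖u 0‖^2 + ‖v 0‖^2) * τ ≤ 2 * c₀ →
        ‖u τ - u 0‖ ≤ K * (1 + ‖v 0‖^2 + ‖u 0‖ * ‖v 0‖) *
          (‖v 0‖ + Real.sqrt ((‖u 0‖^2 + ‖v 0‖^2) * τ)) * τ := by
  set C := |α| + 4 * |β|
  set E := exp (C * (2 * c₀))
  set L := 1 + |m|
  set A := |m| * E * L
  set B := C * (E * L) ^ 2 * (1 + 2 * c₀)
  refine ⟨A + B + 1, by positivity, fun τ u v hτ hτ1 hu hv hSτ => ?_⟩
  set a := ‖u 0‖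
  set b := ‖v 0‖
  set S := a ^ 2 + b ^ 2
  set X := 1 + b ^ 2 + a * b
  set y := b + √S * τ
  have hS : 0 ≤ S := by positivity
  have hX : 1 ≤ X := by nlinarith [norm_nonneg (u 0), norm_nonneg (v 0)]
  have hu_le : ∀ s, ‖u s‖ ≤ √S := fun s =>
    le_sqrt_of_sq_le (by nlinarith [norm_sq_add_norm_sq_eq_of_dirac hu hv s, sq_nonneg ‖v s‖])
  have hv_le : ∀ x ∈ Icc 0 τ, ‖v x‖ ≤ E * L * y := fun x hx => by
    refine (norm_v_le_of_dirac hv hu_le x hx).trans ?_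
    rw [sq_sqrt hS, mul_assoc C, mul_assoc E]
    refine mul_le_mul (exp_le_exp.2 (by gcongr)) ?_ (by positivity) (by positivity)
    nlinarith [abs_nonneg m, sqrt_nonneg S, norm_nonneg (v 0)]
  have hy : √S * y ≤ (1 + 2 * c₀) * X := mul_add_mul_le_of_sq_mul_le (norm_nonneg _)
    (norm_nonneg _) (sqrt_sq_add_sq_le_add (norm_nonneg _) (norm_nonneg _)) (by rwa [sq_sqrt hS])
    (by positivity)
  calc ‖u τ - u 0‖ ≤ (|m| * (E * L * y) + C * √S * (E * L * y) ^ 2) * τ :=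
        norm_u_sub_le_of_dirac hτ.le hu hu_le hv_le
    _ = (A * y + C * (E * L) ^ 2 * (√S * y) * y) * τ := by ring
    _ ≤ (A * (X * y) + C * (E * L) ^ 2 * ((1 + 2 * c₀) * X) * y) * τ := by
        gcongr
        exact le_mul_of_one_le_left (by positivity) hX
    _ = (A + B) * X * y * τ := by ring
    _ ≤ (A + B + 1) * X * (b + √(S * τ)) * τ := by
        gcongr ?_ * _ * ?_ * _
        · linarith
        · exact add_le_add_right (sqrt_mul_le_sqrt_mul_of_le_one hS hτ1) b

theorem stmt18 (m α β c₀ : ℝ) (hm : 0 ≤ m) (hc₀ : 0 < c₀) :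
    ∃ K : ℝ, 0 < K ∧
      ∀ (τ : ℝ) (u v : ℝ → ℂ), 0 < τ → τ ≤ 1 →
        (∀ s, HasDerivAt u (diracN1 m α β (u s) (v s)) s) →
        (∀ s, HasDerivAt v (diracN2 m α β (u s) (v s)) s) →
        (‖u 0‖^2 + ‖v 0‖^2) * τ ≤ 2 * c₀ →
        ‖u τ - u 0‖ ≤ K * (1 + ‖v 0‖^2 + ‖u 0‖ * ‖v 0‖) *
          (‖v 0‖ + Real.sqrt ((‖u 0‖^2 + ‖v 0‖^2) * τ)) * τ :=
  stmt18_general m α β c₀ hc₀
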